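/- For the Moran process on the complete graph K_N, the mean absorption time of a single mutant tends to (N-1)·H_{N-1} as r → +∞, where H_{N-1} = Σ_{k=1}^{N-1} 1/k. -/

import Mathlib

open Finset Filter Topology

/-!
Every factor of the absorption time converges separately as `r → ∞`. With `n = N - j`, the
factor `r^{-(n-1)} (r^n - 1)/(r - 1) = 1 + r⁻¹ + ⋯ + r^{-(n-1)}` tends to `1`, the prefactor is the
reciprocal of the same expression for `n = N`, and `(r j + N - j)/(r j) → 1`. Hence the absorption
time tends to `∑_{j=1}^{N-1} (N-1)/(N-j)`, which is `(N-1) H_{N-1}` after reindexing `j ↦ N - j`.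
-/

lemma tendsto_one_div_pow_pred_mul_pow_sub_one_div_sub_one {n : ℕ} (hn : 0 < n) :
    Tendsto (fun r : ℝ => 1 / r ^ (n - 1) * ((r ^ n - 1) / (r - 1))) atTop (𝓝 1) := by
  have hlim : Tendsto (fun r : ℝ => (1 - (r ^ n)⁻¹) / (1 - r⁻¹)) atTop (𝓝 ((1 - 0) / (1 - 0))) :=
    (tendsto_const_nhds.sub (tendsto_pow_atTop hn.ne').inv_tendsto_atTop).div
      (tendsto_const_nhds.sub tendsto_inv_atTop_zero) (by norm_num)
  rw [sub_zero, div_one] at hlim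
  refine hlim.congr' ?_
  filter_upwards [eventually_gt_atTop 1] with r hr
  obtain ⟨m, rfl⟩ := Nat.exists_eq_add_one_of_ne_zero hn.ne'
  have hr0 : r ≠ 0 := by positivity
  have hr1 : r - 1 ≠ 0 := sub_ne_zero.2 hr.ne'
  rw [Nat.add_sub_cancel]
  field_simp
  ring

lemma tendsto_pow_pred_mul_sub_one_div_pow_sub_one {n : ℕ} (hn : 0 < n) :
    Tendsto (fun r : ℝ => r ^ (n - 1) * ((r - 1) / (r ^ n - 1))) atTop (𝓝 1) := by
  simpa only [mul_inv, one_div, inv_inv, inv_div, inv_one] using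
    (tendsto_one_div_pow_pred_mul_pow_sub_one_div_sub_one hn).inv₀ one_ne_zero

lemma tendsto_mul_add_div_mul_atTop {a : ℝ} (ha : a ≠ 0) (b : ℝ) :
    Tendsto (fun r : ℝ => (r * a + b) / (r * a)) atTop (𝓝 1) := by
  have hlim : Tendsto (fun r : ℝ => 1 + b / a * r⁻¹) atTop (𝓝 (1 + b / a * 0)) :=
    tendsto_const_nhds.add (tendsto_inv_atTop_zero.const_mul _)
  rw [mul_zero, add_zero] at hlim
  refine hlim.congr' ?_
  filter_upwards [eventually_ne_atTop 0] with r hr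
  field_simp

lemma sum_Icc_one_div_sub_reflect (N : ℕ) :
    ∑ j ∈ Icc 1 (N - 1), 1 / ((N : ℝ) - j) = ∑ k ∈ Icc 1 (N - 1), 1 / (k : ℝ) := by
  refine sum_nbij' (N - ·) (N - ·) ?_ ?_ ?_ ?_ ?_ <;> intro j hj <;> simp only [mem_Icc] at hj ⊢
  any_goals omega
  rw [Nat.cast_sub (by omega)]

/-- The Moran mean absorption time of a single mutant on the complete graph
`K_N` tends to `(N-1) H_{N-1}` as `r → +∞`. -/
theorem complete_moran_absorption_time_limit (N : ℕ) (hN : 2 ≤ N) :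
    Tendsto
      (fun r : ℝ =>
        r ^ (N - 1) * ((r - 1) / (r ^ N - 1)) *
          ∑ j ∈ Icc 1 (N - 1),
            ((r * j + N - j) / (r * j)) * (((N : ℝ) - 1) / ((N : ℝ) - j)) *
              (1 / r ^ (N - j - 1)) * ((r ^ (N - j) - 1) / (r - 1)))
      atTop
      (nhds (((N : ℝ) - 1) * ∑ k ∈ Icc 1 (N - 1), 1 / (k : ℝ))) := by
  have hterm : ∀ j ∈ Icc 1 (N - 1),
      Tendsto (fun r : ℝ =>
        ((r * j + N - j) / (r * j)) * (((N : ℝ) - 1) / ((N : ℝ) - j)) *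
          (1 / r ^ (N - j - 1)) * ((r ^ (N - j) - 1) / (r - 1))) atTop
        (𝓝 (((N : ℝ) - 1) / ((N : ℝ) - j))) := by
    intro j hj
    obtain ⟨hj1, hjN⟩ := mem_Icc.1 hj
    have hj0 : (j : ℝ) ≠ 0 := Nat.cast_ne_zero.2 (by omega)
    convert ((tendsto_mul_add_div_mul_atTop hj0 ((N : ℝ) - j)).mul_const
      (((N : ℝ) - 1) / ((N : ℝ) - j))).mul
      (tendsto_one_div_pow_pred_mul_pow_sub_one_div_sub_one (n := N - j) (by omega)) using 1
    · ext r
      ring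
    · rw [one_mul, mul_one]
  have hlim := (tendsto_pow_pred_mul_sub_one_div_pow_sub_one (by omega : 0 < N)).mul
    (tendsto_finsetSum _ hterm)
  rw [← sum_Icc_one_div_sub_reflect, mul_sum]
  simpa only [one_mul, mul_one_div] using hlim
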